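/- Let n be an odd positive integer, K a field of characteristic 0, d ∈ K a non-square, and E an elliptic curve over K with quadratic twist E^d. Then the n-torsion over K(√d) decomposes as E(K(√d))[n] ≅ E(K)[n] ⊕ E^d(K)[n]. -/

import Mathlib

open WeierstrassCurve

/-- The `n`-torsion subgroup of an abelian group. -/
def nTorsion (n : ℕ) (G : Type*) [AddCommGroup G] : AddSubgroup G where
  carrier := {P | n • P = 0}
  zero_mem' := by simp
  add_mem' := by
    intro a b ha hb
    simp only [Set.mem_setOf_eq, smul_add] at *
    rw [ha, hb, add_zero]
  neg_mem' := by
    intro a ha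
    simp only [Set.mem_setOf_eq, smul_neg] at *
    rw [ha, neg_zero]

/-!
The automorphism `σ : s ↦ -s` of `L = K(s)` acts on `E(L)` by an involution `τ`. As `n = 2k + 1`
is odd, `2` is invertible on `E(L)[n]`, and `R = (k + 1)(R + τR) + (k + 1)(R - τR)` splits
`E(L)[n]` uniquely into a `τ`-fixed and a `τ`-anti-fixed part. The fixed points are `E(K)`,
because `K` is the fixed field of `σ`. Over `L` the change of variables `(x, y) ↦ (s²x, s³y)` is
an isomorphism `E ≅ E^d`; since `σ` fixes `s²` and negates `s³`, it carries `τ` to minus the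
action of `σ` on `E^d(L)`, so the anti-fixed points of `τ` are the image of `E^d(K)`.
-/

section Involution

variable {A B C : Type*} [AddCommGroup A] [AddCommGroup B] [AddCommGroup C] {n : ℕ}

lemma mem_nTorsion {x : A} : x ∈ nTorsion n A ↔ n • x = 0 :=
  Iff.rfl

lemma map_mem_nTorsion (f : B →+ A) {x : B} (hx : x ∈ nTorsion n B) : f x ∈ nTorsion n A := by
  rw [mem_nTorsion, ← map_nsmul, mem_nTorsion.mp hx, map_zero]

lemma map_mem_nTorsion_iff {f : B →+ A} (hf : Function.Injective f) {x : B} :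
    f x ∈ nTorsion n A ↔ x ∈ nTorsion n B := by
  rw [mem_nTorsion, mem_nTorsion, ← map_nsmul, map_eq_zero_iff f hf]

lemma eq_zero_of_two_nsmul_eq_zero_of_odd (hn : Odd n) {x : A} (h2 : 2 • x = 0)
    (hx : n • x = 0) : x = 0 := by
  obtain ⟨k, rfl⟩ := hn
  rwa [add_nsmul, mul_nsmul, h2, nsmul_zero, zero_add, one_nsmul] at hx

def nTorsionCoprod (f : B →+ A) (g : C →+ A) (n : ℕ) :
    nTorsion n B × nTorsion n C →+ nTorsion n A :=
  ((f.comp (nTorsion n B).subtype).coprod (g.comp (nTorsion n C).subtype)).codRestrict _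
    fun PQ => add_mem (map_mem_nTorsion f PQ.1.2) (map_mem_nTorsion g PQ.2.2)

theorem bijective_nTorsionCoprod (hn : Odd n) {τ : A →+ A} (hτ : Function.Involutive τ)
    {f : B →+ A} {g : C →+ A} (hf : Function.Injective f) (hg : Function.Injective g)
    (hfix : ∀ x, τ x = x ↔ x ∈ f.range) (hanti : ∀ x, τ x = -x ↔ x ∈ g.range) :
    Function.Bijective (nTorsionCoprod f g n) := by
  refine ⟨(injective_iff_map_eq_zero _).mpr ?_, ?_⟩
  · rintro ⟨⟨P, hP⟩, ⟨Q, _⟩⟩ h0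
    have hsum : f P + g Q = 0 := congrArg Subtype.val h0
    have hdiff : f P - g Q = 0 := by
      have := congrArg τ hsum
      rwa [map_add, (hfix _).mpr ⟨P, rfl⟩, (hanti _).mpr ⟨Q, rfl⟩, map_zero,
        ← sub_eq_add_neg] at this
    have h2 : 2 • f P = (f P + g Q) + (f P - g Q) := by abel
    rw [hsum, hdiff, add_zero] at h2
    have hfP : f P = 0 := eq_zero_of_two_nsmul_eq_zero_of_odd hn h2 (map_mem_nTorsion f hP)
    rw [hfP, zero_add] at hsum
    exact Prod.ext (Subtype.ext ((map_eq_zero_iff f hf).mp hfP))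
      (Subtype.ext ((map_eq_zero_iff g hg).mp hsum))
  · rintro ⟨R, hR⟩
    obtain ⟨k, hk⟩ := hn
    have hτR : τ R ∈ nTorsion n A := map_mem_nTorsion τ hR
    obtain ⟨P, hP⟩ := (hfix ((k + 1) • (R + τ R))).mp
      (by rw [map_nsmul, map_add, hτ R, add_comm (τ R)])
    obtain ⟨Q, hQ⟩ := (hanti ((k + 1) • (R - τ R))).mp
      (by rw [map_nsmul, map_sub, hτ R, ← smul_neg, neg_sub])
    refine ⟨⟨⟨P, ?_⟩, ⟨Q, ?_⟩⟩, Subtype.ext ?_⟩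
    · rw [← map_mem_nTorsion_iff hf, hP]
      exact AddSubgroup.nsmul_mem _ (add_mem hR hτR) _
    · rw [← map_mem_nTorsion_iff hg, hQ]
      exact AddSubgroup.nsmul_mem _ (sub_mem hR hτR) _
    · -- `(k + 1) • 2 = n + 1` acts as the identity on `A[n]`
      show f P + g Q = R
      rw [hP, hQ, ← nsmul_add, show R + τ R + (R - τ R) = 2 • R by abel,
        smul_smul, show (k + 1) * 2 = n + 1 by omega, succ_nsmul, mem_nTorsion.mp hR, zero_add]

end Involution

namespace WeierstrassCurve.Affine

variable {R : Type*} [CommRing R]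

/-- `W` in the coordinates `(u²x, u³y)`, i.e. transformed by the variable change
`⟨u⁻¹, 0, 0, 0⟩`. -/
def scale (W : Affine R) (u : R) : Affine R :=
  ⟨u * W.a₁, u ^ 2 * W.a₂, u ^ 3 * W.a₃, u ^ 4 * W.a₄, u ^ 6 * W.a₆⟩

variable {F : Type*} [Field F] {W W' : Affine F} {u : F}

lemma scale_scale_inv (hu : u ≠ 0) : (W.scale u).scale u⁻¹ = W := by
  ext <;> simp only [scale] <;> field_simp

lemma equation_scale (hu : u ≠ 0) (x y : F) :
    (W.scale u).Equation (u ^ 2 * x) (u ^ 3 * y) ↔ W.Equation x y := by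
  rw [equation_iff', equation_iff']
  conv_rhs => rw [← mul_eq_zero_iff_left (pow_ne_zero 6 hu)]
  simp only [scale]
  ring_nf

lemma nonsingular_scale (hu : u ≠ 0) (x y : F) :
    (W.scale u).Nonsingular (u ^ 2 * x) (u ^ 3 * y) ↔ W.Nonsingular x y := by
  rw [nonsingular_iff', nonsingular_iff', equation_scale hu]
  conv_rhs => rw [← mul_ne_zero_iff_left (pow_ne_zero 4 hu) (b := _ - _),
    ← mul_ne_zero_iff_left (pow_ne_zero 3 hu) (b := _ + _ + _)]
  simp only [scale]
  ring_nf

lemma negY_scale (x y : F) :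
    (W.scale u).negY (u ^ 2 * x) (u ^ 3 * y) = u ^ 3 * W.negY x y := by
  simp only [negY, scale]
  ring

lemma addX_scale (x₁ x₂ ℓ : F) :
    (W.scale u).addX (u ^ 2 * x₁) (u ^ 2 * x₂) (u * ℓ) = u ^ 2 * W.addX x₁ x₂ ℓ := by
  simp only [addX, scale]
  ring

lemma addY_scale (x₁ x₂ y₁ ℓ : F) :
    (W.scale u).addY (u ^ 2 * x₁) (u ^ 2 * x₂) (u ^ 3 * y₁) (u * ℓ) =
      u ^ 3 * W.addY x₁ x₂ y₁ ℓ := by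
  simp only [addY, negAddY, addX, negY, scale]
  ring

lemma slope_scale [DecidableEq F] (hu : u ≠ 0) (x₁ x₂ y₁ y₂ : F) :
    (W.scale u).slope (u ^ 2 * x₁) (u ^ 2 * x₂) (u ^ 3 * y₁) (u ^ 3 * y₂) =
      u * W.slope x₁ x₂ y₁ y₂ := by
  simp only [slope, mul_right_inj' (pow_ne_zero 2 hu), negY_scale,
    mul_right_inj' (pow_ne_zero 3 hu)]
  split_ifs with hx hy
  · rw [mul_zero]
  · rw [← mul_sub]
    by_cases hD : y₁ - W.negY x₁ y₁ = 0
    · rw [hD, mul_zero, div_zero, div_zero, mul_zero]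
    · simp only [scale]
      field_simp
  · have hD : x₁ - x₂ ≠ 0 := sub_ne_zero.mpr hx
    rw [← mul_sub, ← mul_sub]
    field_simp

namespace Point

variable [DecidableEq F]

noncomputable def scaleHom (hu : u ≠ 0) (h : W' = W.scale u) : W.Point →+ W'.Point where
  toFun
    | 0 => 0
    | some x y hxy => some (u ^ 2 * x) (u ^ 3 * y) (h ▸ (nonsingular_scale hu x y).mpr hxy)
  map_zero' := rfl
  map_add' := by
    subst h
    rintro (_ | ⟨x₁, y₁, h₁⟩) (_ | ⟨x₂, y₂, h₂⟩)
    any_goals rfl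
    by_cases hxy : x₁ = x₂ ∧ y₁ = W.negY x₂ y₂
    · rw [add_of_Y_eq hxy.1 hxy.2]
      exact (add_of_Y_eq (by rw [hxy.1]) (by rw [negY_scale, hxy.2])).symm
    · have hxy' : ¬(u ^ 2 * x₁ = u ^ 2 * x₂ ∧
          u ^ 3 * y₁ = (W.scale u).negY (u ^ 2 * x₂) (u ^ 3 * y₂)) := by
        simpa only [negY_scale, mul_right_inj' (pow_ne_zero 2 hu),
          mul_right_inj' (pow_ne_zero 3 hu)] using hxy
      rw [add_some hxy]
      exact ((add_some hxy').trans (by simp only [slope_scale hu, addX_scale, addY_scale])).symm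

lemma scaleHom_some (hu : u ≠ 0) (h : W' = W.scale u) {x y : F} (hxy : W.Nonsingular x y) :
    scaleHom hu h (some x y hxy) =
      some (u ^ 2 * x) (u ^ 3 * y) (h ▸ (nonsingular_scale hu x y).mpr hxy) :=
  rfl

lemma scaleHom_comp_scaleHom {v : F} (hu : u ≠ 0) (hv : v ≠ 0) (h : W' = W.scale u)
    (h' : W = W'.scale v) (hvu : v * u = 1) :
    (scaleHom hv h').comp (scaleHom hu h) = AddMonoidHom.id W.Point := by
  ext (_ | ⟨x, y, hxy⟩)
  · rfl
  · rw [AddMonoidHom.comp_apply, scaleHom_some, scaleHom_some, AddMonoidHom.id_apply, some.injEq,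
      ← mul_assoc, ← mul_assoc, ← mul_pow, ← mul_pow, hvu, one_pow, one_pow, one_mul, one_mul]
    exact ⟨rfl, rfl⟩

noncomputable def scaleEquiv (hu : u ≠ 0) (h : W' = W.scale u) : W.Point ≃+ W'.Point :=
  have h' : W = W'.scale u⁻¹ := by rw [h, scale_scale_inv hu]
  (scaleHom hu h).toAddEquiv (scaleHom (inv_ne_zero hu) h')
    (scaleHom_comp_scaleHom hu (inv_ne_zero hu) h h' (inv_mul_cancel₀ hu))
    (scaleHom_comp_scaleHom (inv_ne_zero hu) hu h' h (mul_inv_cancel₀ hu))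

lemma scaleEquiv_apply (hu : u ≠ 0) (h : W' = W.scale u) (P : W.Point) :
    scaleEquiv hu h P = scaleHom hu h P :=
  rfl

end Point

end WeierstrassCurve.Affine

section QuadraticExtension

open Polynomial

variable {K L : Type*} [Field K] [Field L] [Algebra K L] {d : K} {s : L}

lemma exists_algebraMap_add_algebraMap_mul_eq (hs : s ^ 2 = algebraMap K L d)
    (hgen : Algebra.adjoin K {s} = ⊤) (z : L) :
    ∃ α β : K, algebraMap K L α + algebraMap K L β * s = z := by
  have hz : z ∈ Algebra.adjoin K {s} := hgen ▸ Algebra.mem_top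
  induction hz using Algebra.adjoin_induction with
  | mem x hx => exact ⟨0, 1, by rw [Set.mem_singleton_iff.mp hx]; simp⟩
  | algebraMap r => exact ⟨r, 0, by simp⟩
  | add x y _ _ hx hy =>
    obtain ⟨α, β, rfl⟩ := hx
    obtain ⟨γ, δ, rfl⟩ := hy
    exact ⟨α + γ, β + δ, by simp only [map_add]; ring⟩
  | mul x y _ _ hx hy =>
    obtain ⟨α, β, rfl⟩ := hx
    obtain ⟨γ, δ, rfl⟩ := hy
    refine ⟨α * γ + β * δ * d, α * δ + β * γ, ?_⟩
    simp only [map_add, map_mul]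
    linear_combination (-(algebraMap K L β * algebraMap K L δ)) * hs

lemma exists_algHom_apply_eq_neg (hd : ¬∃ e : K, e ^ 2 = d) (hs : s ^ 2 = algebraMap K L d)
    (hgen : Algebra.adjoin K {s} = ⊤) : ∃ σ : L →ₐ[K] L, σ s = -s := by
  have hmonic : (X ^ 2 - C d).Monic := monic_X_pow_sub_C d two_ne_zero
  have hroot : ∀ t : L, t ^ 2 = algebraMap K L d → aeval t (X ^ 2 - C d) = 0 := fun t ht => by
    simp [ht]
  have hmin : minpoly K s = X ^ 2 - C d :=
    (minpoly.eq_of_irreducible_of_monic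
      (X_pow_sub_C_irreducible_of_prime Nat.prime_two fun e he => hd ⟨e, he⟩)
      (hroot s hs) hmonic).symm
  let pb := PowerBasis.ofAdjoinEqTop ⟨_, hmonic, hroot s hs⟩ hgen
  have hneg : aeval (-s) (minpoly K pb.gen) = 0 := by
    rw [show pb.gen = s from rfl, hmin]
    exact hroot _ (by rw [neg_sq, hs])
  exact ⟨pb.lift (-s) hneg, pb.lift_gen _ _⟩

variable {σ : L →ₐ[K] L}

lemma algHom_comp_self_eq_id (hgen : Algebra.adjoin K {s} = ⊤) (hσ : σ s = -s) :
    σ.comp σ = AlgHom.id K L :=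
  AlgHom.ext_of_adjoin_eq_top hgen fun x hx => by
    rw [Set.mem_singleton_iff.mp hx]
    simp [hσ]

lemma exists_algebraMap_eq_of_apply_eq_self (h2 : (2 : K) ≠ 0) (hs : s ^ 2 = algebraMap K L d)
    (hgen : Algebra.adjoin K {s} = ⊤) (hσ : σ s = -s) {z : L} (hz : σ z = z) :
    ∃ a : K, algebraMap K L a = z := by
  obtain ⟨α, β, rfl⟩ := exists_algebraMap_add_algebraMap_mul_eq hs hgen z
  rw [map_add, map_mul, AlgHom.commutes, AlgHom.commutes, hσ] at hz
  have h0 : algebraMap K L (2 * β) * s = 0 := by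
    rw [map_mul, map_ofNat]
    linear_combination -hz
  refine ⟨α, ?_⟩
  rcases mul_eq_zero.mp h0 with h | h
  · rw [(mul_eq_zero.mp ((map_eq_zero _).mp h)).resolve_left h2, map_zero, zero_mul, add_zero]
  · rw [h, mul_zero, add_zero]

end QuadraticExtension

namespace WeierstrassCurve.Affine.Point

variable {K L : Type*} [Field K] [Field L] [Algebra K L] [DecidableEq L] {W : Affine K}
  {σ : L →ₐ[K] L}

lemma map_involutive (hσ : σ.comp σ = AlgHom.id K L) :
    Function.Involutive (map (W' := W) σ) := by
  intro P
  rw [map_map, hσ]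
  cases P <;> rfl

lemma map_scaleEquiv {W' : Affine K} (hW₁ : W.a₁ = 0) (hW₃ : W.a₃ = 0) {s : L} (hs : s ≠ 0)
    (h : W'⁄L = (W⁄L).scale s) (hσ : σ s = -s) (P : (W⁄L).Point) :
    map σ (scaleEquiv hs h P) = -scaleEquiv hs h (map σ P) := by
  cases P with
  | zero => exact neg_zero.symm
  | some x y hxy =>
    rw [scaleEquiv_apply, scaleEquiv_apply, scaleHom_some, map_some, map_some, scaleHom_some,
      neg_some, some.injEq, h, negY_scale]
    simp only [negY, baseChange_a₁, baseChange_a₃, hW₁, hW₃, _root_.map_zero, _root_.map_mul,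
      _root_.map_pow, hσ]
    constructor <;> ring

variable [DecidableEq K]

lemma map_eq_self_iff_mem_range (hfix : ∀ z, σ z = z → ∃ a, algebraMap K L a = z)
    (P : (W⁄L).Point) : map σ P = P ↔ P ∈ (map (W' := W) (Algebra.ofId K L)).range := by
  constructor
  · intro hP
    cases P with
    | zero => exact ⟨0, rfl⟩
    | some x y hxy =>
      obtain ⟨hx, hy⟩ := (some.injEq ..).mp hP
      obtain ⟨a, rfl⟩ := hfix x hx
      obtain ⟨b, rfl⟩ := hfix y hy
      exact ⟨some a b ((W.baseChange_nonsingular (Algebra.ofId K L).injective a b).mp hxy), rfl⟩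
  · rintro ⟨Q, rfl⟩
    rw [map_map, Subsingleton.elim (σ.comp (Algebra.ofId K L)) (Algebra.ofId K L)]

lemma map_eq_neg_iff_mem_range {W' : Affine K} (hW₁ : W.a₁ = 0) (hW₃ : W.a₃ = 0) {s : L}
    (hs : s ≠ 0) (h : W'⁄L = (W⁄L).scale s) (hσ : σ s = -s)
    (hfix : ∀ z, σ z = z → ∃ a, algebraMap K L a = z) (P : (W⁄L).Point) :
    map σ P = -P ↔ P ∈ ((scaleEquiv hs h).symm.toAddMonoidHom.comp
      (map (W' := W') (Algebra.ofId K L))).range := by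
  let φ := scaleEquiv hs h
  calc map σ P = -P ↔ map σ (φ P) = φ P := by
        rw [map_scaleEquiv hW₁ hW₃ hs h hσ, neg_eq_iff_eq_neg, ← map_neg, φ.injective.eq_iff]
    _ ↔ φ P ∈ (map (W' := W') (Algebra.ofId K L)).range := map_eq_self_iff_mem_range hfix _
    _ ↔ _ := exists_congr fun Q => φ.symm_apply_eq.symm

end WeierstrassCurve.Affine.Point

open WeierstrassCurve.Affine

open Classical in
theorem stmt_12_general (n : ℕ) (hn : Odd n) (K : Type*) [Field K] [CharZero K]
    (d : K) (hd : ¬ ∃ e : K, e ^ 2 = d) (a b c : K)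
    (E : Affine K) (hE : E = ⟨0, a, 0, b, c⟩)
    (Ed : Affine K) (hEd : Ed = ⟨0, d * a, 0, d ^ 2 * b, d ^ 3 * c⟩)
    (L : Type*) [Field L] [Algebra K L] (s : L) (hs : s ^ 2 = algebraMap K L d)
    (hgen : Algebra.adjoin K {s} = ⊤) :
    Nonempty (nTorsion n (Affine.Point (E.baseChange L)) ≃+
      nTorsion n E.Point × nTorsion n Ed.Point) := by
  have hs₀ : s ≠ 0 := by
    rintro rfl
    exact hd ⟨0, (algebraMap K L).injective (by rw [← hs]; simp)⟩
  have hscale : Ed⁄L = (E⁄L).scale s := by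
    subst hE hEd
    ext <;> simp only [scale, baseChange_a₁, baseChange_a₂, baseChange_a₃, baseChange_a₄,
      baseChange_a₆, map_zero, map_mul, map_pow, ← hs] <;> ring
  obtain ⟨σ, hσ⟩ := exists_algHom_apply_eq_neg hd hs hgen
  have hfix : ∀ z, σ z = z → ∃ a, algebraMap K L a = z := fun _ =>
    exists_algebraMap_eq_of_apply_eq_self (two_ne_zero' K) hs hgen hσ
  have hE₁ : E.a₁ = 0 := by rw [hE]
  have hE₃ : E.a₃ = 0 := by rw [hE]
  have hbij := bijective_nTorsionCoprod hn
    (Point.map_involutive (algHom_comp_self_eq_id hgen hσ)) (Point.map_injective _)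
    ((Point.scaleEquiv hs₀ hscale).symm.injective.comp (Point.map_injective _))
    (Point.map_eq_self_iff_mem_range hfix)
    (Point.map_eq_neg_iff_mem_range hE₁ hE₃ hs₀ hscale hσ hfix)
  exact ⟨(AddEquiv.ofBijective _ hbij).symm⟩

open Classical in
/-- Let `n` be an odd positive integer, `K` a field of characteristic `0`, `d ∈ K` a
non-square, `E : y² = x³ + ax² + bx + c` an elliptic curve over `K` with quadratic twist
`E^d : y² = x³ + d·a·x² + d²·b·x + d³·c`, and `L = K(√d)`. Then
`E(L)[n] ≅ E(K)[n] ⊕ E^d(K)[n]`. -/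
theorem stmt_12 (n : ℕ) (hn : Odd n) (hpos : 0 < n) (K : Type*) [Field K] [CharZero K]
    (d : K) (hd : ¬ ∃ e : K, e ^ 2 = d) (a b c : K)
    (E : Affine K) (hE : E = ⟨0, a, 0, b, c⟩) (hΔ : E.Δ ≠ 0)
    (Ed : Affine K) (hEd : Ed = ⟨0, d * a, 0, d ^ 2 * b, d ^ 3 * c⟩)
    (L : Type*) [Field L] [Algebra K L] (s : L) (hs : s ^ 2 = algebraMap K L d)
    (hgen : Algebra.adjoin K {s} = ⊤) :
    Nonempty (nTorsion n (Affine.Point (E.baseChange L)) ≃+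
      nTorsion n E.Point × nTorsion n Ed.Point) :=
  stmt_12_general n hn K d hd a b c E hE Ed hEd L s hs hgen
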